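/- arXiv:1405.5900 — 3 statements merged into one kernel-verified Lean document; each statement's English description precedes it below -/
import Mathlib

section
/- For every 1 ≤ k < n and every 1 ≤ i ≤ n, the minimizing residual polynomial satisfies Q̂_k(λ_i) = Σ_{(j_1,…,j_k)∈I_k^+} ŵ_{j_1,…,j_k} · ∏_{l=1}^k (1 − λ_i/λ_{j_l}); in particular the weights ŵ_{j_1,…,j_k} are nonnegative and sum to one over I_k^+. -/
/-!
With `XXᵀ = ∑ λᵢ uᵢuᵢᵀ`, the objective is `‖Q(XXᵀ)Y‖² = ∑ p̂ᵢ² Q(λᵢ)²`, so `Q̂_k` solves a weighted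
least-squares problem on the nodes `λᵢ`, and any admissible `R` with `∑ p̂ᵢ² R(λᵢ) λᵢ^m = 0` for
`1 ≤ m ≤ k` agrees with `Q̂_k` on the nodes (Pythagoras). The candidate
`R = ∑_J ŵ_J ∏_{j ∈ J} (1 - x/λ_j)` has this property: a sum over `k`-subsets `J` and nodes
`i ∉ J` is a sum over `(k+1)`-subsets `B = J ∪ {i}`, and after clearing the Vandermonde factors
the inner sum is `∑_{i ∈ B} λᵢ^(m-1) / ∏_{a ∈ B \ {i}} (λᵢ - λₐ)`, the coefficient of `x^k` in the
Lagrange interpolant of `x^(m-1)` on `B`, which vanishes because `m - 1 < k`.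
-/

open Matrix Polynomial Finset

/-- Vandermonde product V(x_1,…,x_m) = ∏_{q<r} (x_r − x_q). -/
def vand {m : ℕ} (x : Fin m → ℝ) : ℝ :=
  ∏ r : Fin m, ∏ q ∈ Finset.univ.filter (fun q => q < r), (x r - x q)

section Spectral

variable {ι : Type*} [Fintype ι] [DecidableEq ι]

theorem vecMul_pow_of_vecMul_eq {R : Type*} [CommRing R] {A : Matrix ι ι R} {v : ι → R} {μ : R}
    (h : v ᵥ* A = μ • v) (n : ℕ) : v ᵥ* A ^ n = μ ^ n • v := by
  induction n with
  | zero => simp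
  | succ n ih => rw [pow_succ, ← vecMul_vecMul, ih, smul_vecMul, h, smul_smul, pow_succ]

theorem vecMul_aeval_of_vecMul_eq {R : Type*} [CommRing R] {A : Matrix ι ι R} {v : ι → R}
    {μ : R} (h : v ᵥ* A = μ • v) (p : R[X]) : v ᵥ* aeval A p = p.eval μ • v := by
  induction p using Polynomial.induction_on' with
  | add p q hp hq => simp [vecMul_add, hp, hq, add_smul]
  | monomial n a =>
    rw [aeval_monomial, Algebra.algebraMap_eq_smul_one, smul_mul_assoc, one_mul, vecMul_smul,
      vecMul_pow_of_vecMul_eq h, eval_monomial, smul_smul]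

theorem vecMul_eq_smul_of_orthonormal {u : ι → ι → ℝ}
    (hortho : ∀ i j, u i ⬝ᵥ u j = if i = j then 1 else 0) (lam : ι → ℝ) (j : ι) :
    u j ᵥ* ∑ i, lam i • vecMulVec (u i) (u i) = lam j • u j := by
  simp [vecMul_sum, vecMul_smul, vecMul_vecMulVec, hortho]

theorem sum_sq_eq_sum_sq_dotProduct_of_orthonormal {u : ι → ι → ℝ}
    (hortho : ∀ i j, u i ⬝ᵥ u j = if i = j then 1 else 0) (v : ι → ℝ) :
    ∑ m, v m ^ 2 = ∑ i, (u i ⬝ᵥ v) ^ 2 := by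
  have hU : Matrix.of u * (Matrix.of u)ᵀ = 1 := by
    ext i j
    simpa [Matrix.mul_apply, Matrix.one_apply, dotProduct] using hortho i j
  have hUt : (Matrix.of u)ᵀ * Matrix.of u = 1 := mul_eq_one_comm.mp hU
  calc ∑ m, v m ^ 2 = v ⬝ᵥ v := by simp [dotProduct, sq]
    _ = (Matrix.of u *ᵥ v) ⬝ᵥ (Matrix.of u *ᵥ v) := by
      rw [dotProduct_mulVec, ← vecMul_transpose, vecMul_vecMul, hUt, vecMul_one]
    _ = ∑ i, (u i ⬝ᵥ v) ^ 2 := by simp [dotProduct, sq, mulVec]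

theorem sum_sq_aeval_mulVec_of_orthonormal {u : ι → ι → ℝ}
    (hortho : ∀ i j, u i ⬝ᵥ u j = if i = j then 1 else 0) {A : Matrix ι ι ℝ} {lam : ι → ℝ}
    (hA : A = ∑ i, lam i • vecMulVec (u i) (u i)) (Q : ℝ[X]) (Y : ι → ℝ) :
    ∑ m, (aeval A Q *ᵥ Y) m ^ 2 = ∑ i, (u i ⬝ᵥ Y) ^ 2 * Q.eval (lam i) ^ 2 := by
  rw [sum_sq_eq_sum_sq_dotProduct_of_orthonormal hortho]
  refine sum_congr rfl fun i _ => ?_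
  have hu : u i ᵥ* A = lam i • u i := hA ▸ vecMul_eq_smul_of_orthonormal hortho lam i
  rw [dotProduct_mulVec, vecMul_aeval_of_vecMul_eq hu, smul_dotProduct, smul_eq_mul]
  ring

end Spectral

theorem sum_mul_eval_eq_zero {ι R : Type*} [CommRing R] (s : Finset ι) (f x : ι → R)
    {d : R[X]} {k : ℕ} (hd : d.natDegree ≤ k) (hd0 : d.eval 0 = 0)
    (horth : ∀ m, 1 ≤ m → m ≤ k → ∑ i ∈ s, f i * x i ^ m = 0) :
    ∑ i ∈ s, f i * d.eval (x i) = 0 := by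
  simp_rw [eval_eq_sum_range' (Nat.lt_succ_of_le hd), mul_sum]
  rw [sum_comm]
  refine sum_eq_zero fun m hm => ?_
  rcases m.eq_zero_or_pos with rfl | hm0
  · simp [coeff_zero_eq_eval_zero, hd0]
  · simp_rw [mul_left_comm (f _)]
    rw [← mul_sum, horth m hm0 (by rw [mem_range] at hm; omega), mul_zero]

theorem eval_eq_of_sum_mul_sq_le {ι : Type*} [Fintype ι] {c x : ι → ℝ} (hc : ∀ i, 0 < c i)
    {k : ℕ} {Q R : ℝ[X]} (hQ : Q.natDegree ≤ k) (hR : R.natDegree ≤ k) (hQ0 : Q.eval 0 = 1)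
    (hR0 : R.eval 0 = 1) (horth : ∀ m, 1 ≤ m → m ≤ k → ∑ i, c i * R.eval (x i) * x i ^ m = 0)
    (hle : ∑ i, c i * Q.eval (x i) ^ 2 ≤ ∑ i, c i * R.eval (x i) ^ 2) (i : ι) :
    Q.eval (x i) = R.eval (x i) := by
  set d := Q - R
  have hcross : ∑ i, c i * R.eval (x i) * d.eval (x i) = 0 :=
    sum_mul_eval_eq_zero _ _ _ ((natDegree_sub_le _ _).trans (max_le hQ hR))
      (by simp [d, hQ0, hR0]) horth
  have hpyth : ∑ i, c i * Q.eval (x i) ^ 2 = ∑ i, c i * R.eval (x i) ^ 2 +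
      2 * ∑ i, c i * R.eval (x i) * d.eval (x i) + ∑ i, c i * d.eval (x i) ^ 2 := by
    simp only [d, eval_sub, mul_sum, ← sum_add_distrib]
    exact sum_congr rfl fun i _ => by ring
  have hnonneg : ∀ i ∈ univ, 0 ≤ c i * d.eval (x i) ^ 2 := fun i _ => by
    have := hc i; positivity
  have hzero := (sum_eq_zero_iff_of_nonneg hnonneg).mp
    (le_antisymm (by linarith) (sum_nonneg hnonneg)) i (mem_univ i)
  simpa [d, (hc i).ne', sub_eq_zero] using hzero

section PairwiseDiff

variable {K : Type*} [Field K] {ι : Type*} [DecidableEq ι]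

def pairwiseDiffProd (s : Finset ι) (v : ι → K) : K :=
  ∏ a ∈ s, ∏ b ∈ s.erase a, (v a - v b)

theorem pairwiseDiffProd_insert {s : Finset ι} {i : ι} (hi : i ∉ s) (v : ι → K) :
    pairwiseDiffProd (insert i s) v =
      pairwiseDiffProd s v * ∏ a ∈ s, ((v a - v i) * (v i - v a)) := by
  have hrest : ∏ a ∈ s, ∏ b ∈ (insert i s).erase a, (v a - v b) =
      ∏ a ∈ s, ((v a - v i) * ∏ b ∈ s.erase a, (v a - v b)) := by
    refine prod_congr rfl fun a ha => ?_
    rw [erase_insert_of_ne (ne_of_mem_of_not_mem ha hi).symm,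
      prod_insert fun h => hi (mem_of_mem_erase h)]
  rw [pairwiseDiffProd, prod_insert hi, erase_insert hi, hrest, prod_mul_distrib,
    pairwiseDiffProd, prod_mul_distrib]
  ring

theorem sum_pow_div_prod_sub_eq_zero {s : Finset ι} {v : ι → K} (hv : Set.InjOn v s)
    {d : ℕ} (hd : d + 1 < #s) :
    ∑ i ∈ s, v i ^ d / ∏ a ∈ s.erase i, (v i - v a) = 0 := by
  have h := Lagrange.coeff_eq_sum hv (P := X ^ d)
    (by rw [degree_X_pow]; exact_mod_cast (Nat.lt_succ_self d).trans hd)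
  rw [coeff_X_pow, if_neg (by omega)] at h
  simpa using h.symm

theorem sum_powersetCard_sum_sdiff {M : Type*} [AddCommMonoid M] (s : Finset ι) (k : ℕ)
    (f : Finset ι → ι → M) :
    ∑ A ∈ s.powersetCard k, ∑ i ∈ s \ A, f A i =
      ∑ B ∈ s.powersetCard (k + 1), ∑ i ∈ B, f (B.erase i) i := by
  rw [sum_sigma', sum_sigma']
  refine sum_bij' (fun p _ => ⟨insert p.2 p.1, p.2⟩) (fun p _ => ⟨p.1.erase p.2, p.2⟩)
    ?_ ?_ ?_ ?_ ?_
  · rintro ⟨A, i⟩ h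
    simp only [mem_sigma, mem_powersetCard, mem_sdiff] at h ⊢
    exact ⟨⟨insert_subset h.2.1 h.1.1, card_insert_of_notMem h.2.2 ▸ h.1.2 ▸ rfl⟩,
      mem_insert_self i A⟩
  · rintro ⟨B, i⟩ h
    simp only [mem_sigma, mem_powersetCard, mem_sdiff] at h ⊢
    exact ⟨⟨(erase_subset i B).trans h.1.1, by rw [card_erase_of_mem h.2, h.1.2]; rfl⟩,
      h.1.1 h.2, notMem_erase i B⟩
  · rintro ⟨A, i⟩ h
    simp only [mem_sigma, mem_sdiff] at h
    simp [erase_insert h.2.2]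
  · rintro ⟨B, i⟩ h
    simp only [mem_sigma] at h
    simp [insert_erase h.2]
  · rintro ⟨A, i⟩ h
    simp only [mem_sigma, mem_sdiff] at h
    simp [erase_insert h.2.2]

def subsetWeight (c v : ι → K) (A : Finset ι) : K :=
  (∏ a ∈ A, c a * v a ^ 2) * pairwiseDiffProd A v

theorem subsetWeight_erase_mul {c v : ι → K} {B : Finset ι} {i : ι} (hi : i ∈ B)
    (hv : Set.InjOn v B) (hv0 : ∀ a ∈ B, v a ≠ 0) (m : ℕ) :
    subsetWeight c v (B.erase i) * (c i * v i ^ (m + 1) * ∏ a ∈ B.erase i, (1 - v i / v a)) =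
      (∏ b ∈ B, c b * v b) * pairwiseDiffProd B v *
        (v i ^ m / ∏ a ∈ B.erase i, (v i - v a)) := by
  have hdiff : ∏ a ∈ B.erase i, (v i - v a) ≠ 0 := prod_ne_zero_iff.mpr fun a ha =>
    sub_ne_zero.mpr fun h => (ne_of_mem_erase ha) (hv (mem_of_mem_erase ha) hi h.symm)
  have hprod : ∏ a ∈ B.erase i, v a ≠ 0 :=
    prod_ne_zero_iff.mpr fun a ha => hv0 a (mem_of_mem_erase ha)
  have hfactor : ∏ a ∈ B.erase i, (1 - v i / v a) =
      (∏ a ∈ B.erase i, (v a - v i)) / ∏ a ∈ B.erase i, v a := by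
    rw [← prod_div_distrib]
    exact prod_congr rfl fun a ha => by field_simp [hv0 a (mem_of_mem_erase ha)]
  have hpdp := pairwiseDiffProd_insert (notMem_erase i B) v
  rw [insert_erase hi] at hpdp
  rw [subsetWeight, hfactor, hpdp, ← mul_prod_erase B _ hi, prod_mul_distrib, prod_mul_distrib,
    prod_mul_distrib, prod_pow, pow_succ]
  field_simp
  ring

theorem sum_powersetCard_subsetWeight_mul_eq_zero (s : Finset ι) (c : ι → K) {v : ι → K}
    (hv : Set.InjOn v s) (hv0 : ∀ i ∈ s, v i ≠ 0) {k m : ℕ} (hm : 1 ≤ m) (hmk : m ≤ k) :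
    ∑ A ∈ s.powersetCard k,
      subsetWeight c v A * ∑ i ∈ s, c i * v i ^ m * ∏ a ∈ A, (1 - v i / v a) = 0 := by
  have hvanish : ∀ A ∈ s.powersetCard k, ∑ i ∈ s, c i * v i ^ m * ∏ a ∈ A, (1 - v i / v a) =
      ∑ i ∈ s \ A, c i * v i ^ m * ∏ a ∈ A, (1 - v i / v a) := by
    refine fun A _ => (sum_subset sdiff_subset fun i hi hiA => ?_).symm
    rw [prod_eq_zero (not_not.mp fun h => hiA (mem_sdiff.mpr ⟨hi, h⟩))
      (by rw [div_self (hv0 i hi), sub_self]), mul_zero]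
  rw [sum_congr rfl fun A hA => by rw [hvanish A hA, mul_sum], sum_powersetCard_sum_sdiff]
  refine sum_eq_zero fun B hB => ?_
  rw [mem_powersetCard] at hB
  obtain ⟨m, rfl⟩ := Nat.exists_eq_add_of_le' hm
  rw [sum_congr rfl fun i hi => subsetWeight_erase_mul hi (hv.mono hB.1)
    (fun a ha => hv0 a (hB.1 ha)) m, ← mul_sum,
    sum_pow_div_prod_sub_eq_zero (hv.mono hB.1) (by omega), mul_zero]

theorem pairwiseDiffProd_image {α : Type*} [DecidableEq α] {f : α → ι}
    (hf : Function.Injective f) (s : Finset α) (v : ι → K) :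
    pairwiseDiffProd (s.image f) v = pairwiseDiffProd s (v ∘ f) := by
  unfold pairwiseDiffProd
  rw [prod_image hf.injOn]
  refine prod_congr rfl fun a _ => ?_
  rw [← image_erase hf, prod_image hf.injOn]
  rfl

end PairwiseDiff

theorem Fin.sum_card_filter_lt (k : ℕ) : ∑ b : Fin k, #(univ.filter (· < b)) = k.choose 2 := by
  simp only [filter_gt_eq_Iio, Fin.card_Iio]
  rw [Fin.sum_univ_eq_sum_range (fun i => i), sum_range_id, Nat.choose_two_right]

theorem pairwiseDiffProd_univ_eq {k : ℕ} (x : Fin k → ℝ) :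
    pairwiseDiffProd univ x = (-1) ^ k.choose 2 * vand x ^ 2 := by
  have hsplit : ∀ a : Fin k, ∏ b ∈ univ.erase a, (x a - x b) =
      (∏ b ∈ univ.filter (· < a), (x a - x b)) * ∏ b ∈ univ.filter (a < ·), (x a - x b) := by
    intro a
    rw [← filter_ne', prod_filter, prod_filter, prod_filter, ← prod_mul_distrib]
    refine prod_congr rfl fun b _ => ?_
    rcases lt_trichotomy b a with h | rfl | h
    · simp [h, h.ne, h.not_gt]
    · simp
    · simp [h, h.ne', h.not_gt]
  have hswap : ∏ a : Fin k, ∏ b ∈ univ.filter (a < ·), (x a - x b) =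
      ∏ b : Fin k, ∏ a ∈ univ.filter (· < b), (-1) * (x b - x a) := by
    rw [prod_comm' (t' := univ) (s' := fun b => univ.filter (· < b)) (by simp)]
    exact prod_congr rfl fun b _ => prod_congr rfl fun a _ => by ring
  simp only [pairwiseDiffProd, hsplit, prod_mul_distrib, hswap, prod_const, prod_pow_eq_pow_sum]
  rw [Fin.sum_card_filter_lt]
  unfold vand
  ring

theorem sum_strictAnti_eq_sum_powersetCard {α M : Type*} [LinearOrder α] [Fintype α]
    [AddCommMonoid M] {k : ℕ} [DecidablePred fun j : Fin k → α => StrictAnti j]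
    (g : Finset α → M) :
    ∑ j ∈ univ.filter (fun j : Fin k → α => StrictAnti j), g (univ.image j) =
      ∑ A ∈ univ.powersetCard k, g A := by
  refine sum_bij (fun j _ => univ.image j) (fun j hj => ?_) (fun j hj j' hj' h => ?_)
    (fun A hA => ?_) (fun _ _ => rfl)
  · rw [mem_filter] at hj
    simp [mem_powersetCard, card_image_of_injective _ hj.2.injective]
  · rw [mem_filter] at hj hj'
    refine (hj.2.range_inj hj'.2).mp ?_
    simpa using congrArg ((↑) : Finset α → Set α) h
  · have hcard := (mem_powersetCard.mp hA).2
    refine ⟨A.orderEmbOfFin hcard ∘ Fin.rev, mem_filter.mpr ⟨mem_univ _,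
      (A.orderEmbOfFin hcard).strictMono.comp_strictAnti Fin.rev_strictAnti⟩, ?_⟩
    rw [← image_image, image_univ_of_surjective Fin.rev_surjective, image_orderEmbOfFin_univ]

/-- The unnormalised weight `D j` of the statement, with `c i = p̂ᵢ²`. -/
def tupleWeight {ι : Type*} {k : ℕ} (c lam : ι → ℝ) (j : Fin k → ι) : ℝ :=
  (∏ l, c (j l) * lam (j l) ^ 2) * vand (fun l => lam (j l)) ^ 2

theorem vand_ne_zero {k : ℕ} {x : Fin k → ℝ} (hx : Function.Injective x) : vand x ≠ 0 :=
  prod_ne_zero_iff.mpr fun _ _ => prod_ne_zero_iff.mpr fun _ hq =>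
    sub_ne_zero.mpr fun h => (mem_filter.mp hq).2.ne' (hx h)

theorem tupleWeight_pos {ι : Type*} {k : ℕ} {c lam : ι → ℝ} (hc : ∀ i, 0 < c i)
    (hlam : ∀ i, lam i ≠ 0) {j : Fin k → ι} (hj : Function.Injective (lam ∘ j)) :
    0 < tupleWeight c lam j := by
  have hfactor : ∀ l, 0 < c (j l) * lam (j l) ^ 2 := fun l => by
    have := hc (j l); have := hlam (j l); positivity
  have := vand_ne_zero hj
  exact mul_pos (prod_pos fun l _ => hfactor l) (by positivity)

theorem tupleWeight_eq_subsetWeight {ι : Type*} [DecidableEq ι] {k : ℕ} (c lam : ι → ℝ)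
    {j : Fin k → ι} (hj : Function.Injective j) :
    tupleWeight c lam j = (-1) ^ k.choose 2 * subsetWeight c lam (univ.image j) := by
  rw [subsetWeight, pairwiseDiffProd_image hj, pairwiseDiffProd_univ_eq, prod_image hj.injOn,
    tupleWeight, mul_left_comm _ ((-1 : ℝ) ^ _), ← mul_assoc, ← pow_add,
    Even.neg_one_pow ⟨_, rfl⟩, one_mul]
  rfl

theorem sum_tupleWeight_mul_eq_zero {ι : Type*} [LinearOrder ι] [Fintype ι] {k : ℕ}
    [DecidablePred fun j : Fin k → ι => StrictAnti j] (c : ι → ℝ) {lam : ι → ℝ}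
    (hlam : Function.Injective lam) (hlam0 : ∀ i, lam i ≠ 0) {m : ℕ} (hm : 1 ≤ m)
    (hmk : m ≤ k) :
    ∑ j ∈ univ.filter (fun j : Fin k → ι => StrictAnti j),
      tupleWeight c lam j * ∑ i, c i * lam i ^ m * ∏ l, (1 - lam i / lam (j l)) = 0 := by
  set G : Finset ι → ℝ := fun A =>
    subsetWeight c lam A * ∑ i, c i * lam i ^ m * ∏ a ∈ A, (1 - lam i / lam a)
  have hterm : ∀ j ∈ univ.filter (fun j : Fin k → ι => StrictAnti j),
      tupleWeight c lam j * ∑ i, c i * lam i ^ m * ∏ l, (1 - lam i / lam (j l)) =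
        (-1) ^ k.choose 2 * G (univ.image j) := fun j hj => by
    have hj := (mem_filter.mp hj).2.injective
    simp only [G, tupleWeight_eq_subsetWeight c lam hj, prod_image hj.injOn, mul_assoc]
  rw [sum_congr rfl hterm, ← mul_sum, sum_strictAnti_eq_sum_powersetCard G,
    sum_powersetCard_subsetWeight_mul_eq_zero univ c hlam.injOn (fun i _ => hlam0 i) hm hmk,
    mul_zero]

noncomputable def tupleResidual {ι : Type*} {k : ℕ} (S : Finset (Fin k → ι))
    (w : (Fin k → ι) → ℝ) (lam : ι → ℝ) : ℝ[X] :=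
  ∑ j ∈ S, C (w j) * ∏ l, (1 - C (lam (j l))⁻¹ * X)

section TupleResidual

variable {ι : Type*} {k : ℕ} (S : Finset (Fin k → ι)) (w : (Fin k → ι) → ℝ) (lam : ι → ℝ)

theorem eval_tupleResidual (x : ℝ) :
    (tupleResidual S w lam).eval x = ∑ j ∈ S, w j * ∏ l, (1 - x / lam (j l)) := by
  simp [tupleResidual, eval_finsetSum, eval_prod, div_eq_inv_mul]

theorem natDegree_tupleResidual_le : (tupleResidual S w lam).natDegree ≤ k := by
  refine natDegree_sum_le_of_forall_le _ _ fun j _ => (natDegree_C_mul_le _ _).trans ?_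
  calc (∏ l, (1 - C (lam (j l))⁻¹ * X)).natDegree
      ≤ ∑ l, (1 - C (lam (j l))⁻¹ * X).natDegree := natDegree_prod_le _ _
    _ ≤ ∑ _l : Fin k, 1 := by gcongr; compute_degree
    _ = k := by simp

theorem sum_mul_eval_tupleResidual [Fintype ι] (f : ι → ℝ) :
    ∑ i, f i * (tupleResidual S w lam).eval (lam i) =
      ∑ j ∈ S, w j * ∑ i, f i * ∏ l, (1 - lam i / lam (j l)) := by
  simp only [eval_tupleResidual, mul_sum]
  rw [sum_comm]
  exact sum_congr rfl fun j _ => sum_congr rfl fun i _ => by ring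

end TupleResidual

open Classical in
/-- Q̂_k(λ_i) = Σ_{(j_1,…,j_k)∈I_k^+} ŵ_{j_1,…,j_k} ∏_l (1 − λ_i/λ_{j_l}),
where the weights ŵ are nonnegative and sum to one over I_k^+ (the strictly
decreasing k-tuples of indices). -/
theorem stmt5 {n p : ℕ} (X : Matrix (Fin n) (Fin p) ℝ) (Y : Fin n → ℝ)
    (lam : Fin n → ℝ) (u : Fin n → Fin n → ℝ)
    (hortho : ∀ i j, u i ⬝ᵥ u j = if i = j then (1 : ℝ) else 0)
    (hspec : X * Xᵀ = ∑ i, lam i • vecMulVec (u i) (u i))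
    (hanti : StrictAnti lam) (hpos : ∀ i, 0 < lam i)
    (hphat : ∀ i, u i ⬝ᵥ Y ≠ 0)
    (Qhat : ℕ → Polynomial ℝ)
    (hQmem : ∀ k, 1 ≤ k → k < n → (Qhat k).natDegree ≤ k ∧ (Qhat k).eval 0 = 1)
    (hQmin : ∀ k, 1 ≤ k → k < n → ∀ Q : Polynomial ℝ, Q.natDegree ≤ k → Q.eval 0 = 1 →
      ∑ i, (((Polynomial.aeval (X * Xᵀ)) (Qhat k) *ᵥ Y) i) ^ 2 ≤
        ∑ i, (((Polynomial.aeval (X * Xᵀ)) Q *ᵥ Y) i) ^ 2)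
    (k : ℕ) (hk1 : 1 ≤ k) (hkn : k < n) (i : Fin n) :
    let S : Finset (Fin k → Fin n) := Finset.univ.filter (fun j => StrictAnti j)
    let D : (Fin k → Fin n) → ℝ := fun j =>
      (∏ l, (u (j l) ⬝ᵥ Y) ^ 2 * lam (j l) ^ 2) * vand (fun l => lam (j l)) ^ 2
    let w : (Fin k → Fin n) → ℝ := fun j => D j / ∑ j' ∈ S, D j'
    ((Qhat k).eval (lam i) = ∑ j ∈ S, w j * ∏ l, (1 - lam i / lam (j l))) ∧
      (∀ j ∈ S, 0 ≤ w j) ∧ (∑ j ∈ S, w j = 1) := by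
  intro S D w
  let c : Fin n → ℝ := fun i => (u i ⬝ᵥ Y) ^ 2
  have hc : ∀ i, 0 < c i := fun i => by have := hphat i; positivity
  have hlam0 : ∀ i, lam i ≠ 0 := fun i => (hpos i).ne'
  have hD : ∀ j ∈ S, 0 < D j := fun j hj =>
    tupleWeight_pos hc hlam0 (hanti.injective.comp (mem_filter.mp hj).2.injective)
  have hSne : S.Nonempty := ⟨fun l => Fin.castLE hkn.le l.rev, mem_filter.mpr
    ⟨mem_univ _, (Fin.strictMono_castLE hkn.le).comp_strictAnti Fin.rev_strictAnti⟩⟩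
  have hDsum : 0 < ∑ j ∈ S, D j := sum_pos hD hSne
  have hwsum : ∑ j ∈ S, w j = 1 := by rw [← sum_div, div_self hDsum.ne']
  have hR0 : (tupleResidual S w lam).eval 0 = 1 := by simp [eval_tupleResidual, hwsum]
  have horth : ∀ m, 1 ≤ m → m ≤ k →
      ∑ i, c i * (tupleResidual S w lam).eval (lam i) * lam i ^ m = 0 := fun m hm hmk => by
    simp_rw [mul_right_comm (c _), sum_mul_eval_tupleResidual, w, div_mul_eq_mul_div, ← sum_div]
    rw [div_eq_zero_iff]
    exact Or.inl (sum_tupleWeight_mul_eq_zero c hanti.injective hlam0 hm hmk)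
  have hmin := hQmin k hk1 hkn _ (natDegree_tupleResidual_le S w lam) hR0
  rw [sum_sq_aeval_mulVec_of_orthonormal hortho hspec,
    sum_sq_aeval_mulVec_of_orthonormal hortho hspec] at hmin
  refine ⟨?_, fun j hj => div_nonneg (hD j hj).le hDsum.le, hwsum⟩
  rw [eval_eq_of_sum_mul_sq_le hc (hQmem k hk1 hkn).1 (natDegree_tupleResidual_le S w lam)
    (hQmem k hk1 hkn).2 hR0 horth hmin i, eval_tupleResidual]
end

section
/- Let n ≥ k ≥ 1, let a_1, …, a_n and c_1, …, c_n be arbitrary real numbers. Then Σ_{(j_1,…,j_k)∈I_k} c_{j_1}⋯c_{j_k} · V(a_{j_1},…,a_{j_k}) · a_{j_1}² a_{j_2}³ ⋯ a_{j_k}^{k+1} = Σ_{(j_1,…,j_k)∈I_k^+} c_{j_1}⋯c_{j_k} · a_{j_1}² ⋯ a_{j_k}² · V(a_{j_1},…,a_{j_k})², where I_k is the set of k-tuples of pairwise distinct indices from {1,…,n} and I_k^+ is the set of strictly decreasing k-tuples n ≥ j_1 > … > j_k ≥ 1. -/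
/-!
Every injective tuple `j : Fin k → Fin n` factors uniquely as `w ∘ σ` with `w` strictly
decreasing and `σ` a permutation, so the left-hand side is a sum over strictly decreasing `w`
of sums over `σ`. Since `V(x ∘ σ) = sign σ · V(x)` and `∑_σ sign σ ∏_l x_{σ l}^l = V(x)` is the
Leibniz expansion of the Vandermonde determinant, the inner sum is `∏_l x_l² · V(x)²`.
-/

open Finset

section SortPerm

variable {α : Type*} [LinearOrder α] {k : ℕ}

theorem Function.Injective.exists_strictAnti_comp_perm {j : Fin k → α} (hj : j.Injective) :
    ∃ w : Fin k → α, ∃ σ : Equiv.Perm (Fin k), StrictAnti w ∧ w ∘ σ = j := by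
  set τ := Tuple.sort (OrderDual.toDual ∘ j)
  have hanti : Antitone (j ∘ τ) := monotone_toDual_comp_iff.mp (Tuple.monotone_sort _)
  refine ⟨j ∘ τ, τ⁻¹, hanti.strictAnti_of_injective (hj.comp τ.injective), ?_⟩
  ext l
  simp

theorem StrictAnti.comp_perm_injective {w w' : Fin k → α} {σ σ' : Equiv.Perm (Fin k)}
    (hw : StrictAnti w) (hw' : StrictAnti w') (h : w ∘ σ = w' ∘ σ') : w = w' ∧ σ = σ' := by
  have hσ : (w ∘ σ) ∘ ⇑σ⁻¹ = w := by ext; simp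
  have hσ' : (w ∘ σ) ∘ ⇑σ'⁻¹ = w' := by rw [h]; ext; simp
  have hww' : w = w' := calc
    w = (w ∘ σ) ∘ ⇑σ⁻¹ := hσ.symm
    _ = (w ∘ σ) ∘ ⇑σ'⁻¹ := Tuple.unique_antitone (by rw [hσ]; exact hw.antitone)
      (by rw [hσ']; exact hw'.antitone)
    _ = w' := hσ'
  subst hww'
  exact ⟨rfl, Equiv.ext fun l => hw.injective (congrFun h l)⟩

theorem sum_injective_eq_sum_strictAnti_sum_perm {M : Type*} [AddCommMonoid M] [Fintype α]
    [DecidablePred (Function.Injective : (Fin k → α) → Prop)]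
    [DecidablePred (StrictAnti : (Fin k → α) → Prop)] (f : (Fin k → α) → M) :
    ∑ j ∈ univ.filter Function.Injective, f j
      = ∑ w ∈ univ.filter StrictAnti, ∑ σ : Equiv.Perm (Fin k), f (w ∘ σ) := by
  rw [← sum_product']
  symm
  refine sum_bij (fun p _ => p.1 ∘ p.2) ?_ ?_ ?_ (fun _ _ => rfl)
  · rintro ⟨w, σ⟩ hp
    simp only [mem_product, mem_filter, mem_univ, true_and, and_true] at hp ⊢
    exact hp.injective.comp σ.injective
  · rintro ⟨w, σ⟩ hp ⟨w', σ'⟩ hp' h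
    simp only [mem_product, mem_filter, mem_univ, true_and, and_true] at hp hp'
    obtain ⟨rfl, rfl⟩ := hp.comp_perm_injective hp' h
    rfl
  · intro j hj
    simp only [mem_filter, mem_univ, true_and] at hj
    obtain ⟨w, σ, hw, rfl⟩ := hj.exists_strictAnti_comp_perm
    exact ⟨(w, σ), by simpa using hw, rfl⟩

end SortPerm

section Vandermonde

variable {m : ℕ}

theorem vand_eq_det_vandermonde (x : Fin m → ℝ) : vand x = (Matrix.vandermonde x).det := by
  rw [Matrix.det_vandermonde, vand]
  exact prod_comm' (by simp)

theorem vand_comp_perm (x : Fin m → ℝ) (σ : Equiv.Perm (Fin m)) :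
    vand (fun l => x (σ l)) = (Equiv.Perm.sign σ : ℝ) * vand x := by
  rw [vand_eq_det_vandermonde, vand_eq_det_vandermonde, ← Matrix.det_permute]
  rfl

theorem sum_sign_mul_prod_pow_eq_vand (x : Fin m → ℝ) :
    ∑ σ : Equiv.Perm (Fin m), (Equiv.Perm.sign σ : ℝ) * ∏ l, x (σ l) ^ (l : ℕ) = vand x := by
  rw [vand_eq_det_vandermonde, Matrix.det_apply]
  refine sum_congr rfl fun σ _ => ?_
  simp [Matrix.vandermonde, Units.smul_def]

theorem sum_perm_vand_mul_prod_pow_add_two (x : Fin m → ℝ) :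
    ∑ σ : Equiv.Perm (Fin m), vand (fun l => x (σ l)) * ∏ l, x (σ l) ^ ((l : ℕ) + 2)
      = (∏ l, x l ^ 2) * vand x ^ 2 := by
  have hsq (σ : Equiv.Perm (Fin m)) : ∏ l, x (σ l) ^ 2 = ∏ l, x l ^ 2 :=
    Equiv.prod_comp σ (fun l => x l ^ 2)
  calc
    _ = ∑ σ : Equiv.Perm (Fin m), (∏ l, x l ^ 2) * vand x *
          ((Equiv.Perm.sign σ : ℝ) * ∏ l, x (σ l) ^ (l : ℕ)) := by
      refine sum_congr rfl fun σ _ => ?_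
      simp only [pow_add, prod_mul_distrib, vand_comp_perm, hsq]
      ring
    _ = (∏ l, x l ^ 2) * vand x ^ 2 := by
      rw [← mul_sum, sum_sign_mul_prod_pow_eq_vand]
      ring

end Vandermonde

open Classical in
theorem stmt6_general {n : ℕ} (k : ℕ) (a c : Fin n → ℝ) :
    ∑ j ∈ Finset.univ.filter (fun j : Fin k → Fin n => Function.Injective j),
        (∏ l, c (j l)) * vand (fun l => a (j l)) * ∏ l, a (j l) ^ ((l : ℕ) + 2)
      = ∑ j ∈ Finset.univ.filter (fun j : Fin k → Fin n => StrictAnti j),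
          (∏ l, c (j l)) * (∏ l, a (j l) ^ 2) * vand (fun l => a (j l)) ^ 2 := by
  rw [sum_injective_eq_sum_strictAnti_sum_perm]
  refine sum_congr rfl fun w _ => ?_
  have hc (σ : Equiv.Perm (Fin k)) : ∏ l, c (w (σ l)) = ∏ l, c (w l) :=
    Equiv.prod_comp σ (fun l => c (w l))
  simp only [Function.comp_apply, hc, mul_assoc, ← mul_sum]
  rw [sum_perm_vand_mul_prod_pow_add_two (fun l => a (w l))]

open Classical in
/-- Σ_{(j_1,…,j_k)∈I_k} c_{j_1}⋯c_{j_k} V(a_{j_1},…,a_{j_k})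
a_{j_1}² a_{j_2}³ ⋯ a_{j_k}^{k+1}
= Σ_{(j_1,…,j_k)∈I_k^+} c_{j_1}⋯c_{j_k} a_{j_1}²⋯a_{j_k}² V(a_{j_1},…,a_{j_k})². -/
theorem stmt6 {n : ℕ} (k : ℕ) (hk1 : 1 ≤ k) (hkn : k ≤ n) (a c : Fin n → ℝ) :
    ∑ j ∈ Finset.univ.filter (fun j : Fin k → Fin n => Function.Injective j),
        (∏ l, c (j l)) * vand (fun l => a (j l)) * ∏ l, a (j l) ^ ((l : ℕ) + 2)
      = ∑ j ∈ Finset.univ.filter (fun j : Fin k → Fin n => StrictAnti j),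
          (∏ l, c (j l)) * (∏ l, a (j l) ^ 2) * vand (fun l => a (j l)) ^ 2 :=
  stmt6_general k a c
end

section
/- For every 1 ≤ k < n, the PLS filter factor in the direction of the smallest eigenvalue satisfies 0 < f_n^k < 1, where f_n^k = 1 − Q̂_k(λ_n); equivalently 0 < Q̂_k(λ_n) < 1. -/
/-!
With the weights `w i = (u i ⬝ᵥ Y) ^ 2`, the PLS objective is `∑ i, w i * Q(λ i) ^ 2`, so the
minimiser `Q̂` is orthogonal, for the discrete inner product `∑ i, w i * P(λ i) * R(λ i)`, to every
`R` of degree `≤ k` with `R 0 = 0`. Collect the sign changes of `Q̂` along the eigenvalues into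
zeros `θ > λₙ`. If there were fewer than `k` of them, `R = X * ∏ (X - θ)` would have an inner
product with `Q̂` whose terms all have one sign, forcing `Q̂` to vanish at all `n > k` eigenvalues.
So there are exactly `k`, `Q̂(x) = ∏ (1 - x / θ)`, and every factor lies in `(0, 1)` at `x = λₙ`.
-/

open Matrix Polynomial Finset Function

theorem Matrix.aeval_diagonal {R n : Type*} [CommSemiring R] [Fintype n] [DecidableEq n]
    (d : n → R) (Q : R[X]) : aeval (diagonal d) Q = diagonal fun i => Q.eval (d i) := by
  rw [← diagonalAlgHom_apply R, aeval_algHom_apply, aeval_pi]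
  rfl

theorem Matrix.sum_smul_vecMulVec_self {R ι m : Type*} [CommSemiring R] [Fintype ι]
    [DecidableEq ι] (lam : ι → R) (u : ι → m → R) :
    ∑ i, lam i • vecMulVec (u i) (u i) = (of u)ᵀ * diagonal lam * of u := by
  ext a b
  simp only [sum_apply, smul_apply, vecMulVec_apply, smul_eq_mul, mul_apply, transpose_apply,
    of_apply, diagonal_apply, mul_ite, mul_zero, sum_ite_eq', mem_univ, if_true]
  exact sum_congr rfl fun i _ => by ring

theorem sum_sq_aeval_mulVec_eq {n : Type*} [Fintype n] [DecidableEq n] {A : Matrix n n ℝ}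
    {lam : n → ℝ} {u : n → n → ℝ} (hortho : ∀ i j, u i ⬝ᵥ u j = if i = j then (1 : ℝ) else 0)
    (hA : A = ∑ i, lam i • vecMulVec (u i) (u i)) (Q : ℝ[X]) (Y : n → ℝ) :
    ∑ j, ((aeval A Q *ᵥ Y) j) ^ 2 = ∑ i, (u i ⬝ᵥ Y) ^ 2 * Q.eval (lam i) ^ 2 := by
  have hUUt : of u * (of u)ᵀ = 1 := by
    ext i j
    simpa [mul_apply, one_apply, dotProduct] using hortho i j
  let V : (Matrix n n ℝ)ˣ := ⟨(of u)ᵀ, of u, mul_eq_one_comm.1 hUUt, hUUt⟩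
  have haeval : aeval A Q = (of u)ᵀ * diagonal (fun i => Q.eval (lam i)) * of u := by
    have := aeval_smul Q (ConjAct.toConjAct V) (diagonal lam)
    simp only [ConjAct.units_smul_def, ConjAct.ofConjAct_toConjAct] at this
    rw [hA, sum_smul_vecMulVec_self, ← aeval_diagonal]
    exact this
  have hiso : ∀ v : n → ℝ, (of u)ᵀ *ᵥ v ⬝ᵥ (of u)ᵀ *ᵥ v = v ⬝ᵥ v := fun v => by
    rw [dotProduct_mulVec, vecMul_transpose, mulVec_mulVec, hUUt, one_mulVec]
  have hsq : ∀ v : n → ℝ, ∑ j, v j ^ 2 = v ⬝ᵥ v := fun v => by simp [dotProduct, sq]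
  rw [haeval, hsq, ← mulVec_mulVec, ← mulVec_mulVec, hiso]
  have hD : (diagonal fun i => Q.eval (lam i)) *ᵥ (of u *ᵥ Y) =
      fun i => Q.eval (lam i) * (u i ⬝ᵥ Y) :=
    funext fun i => mulVec_diagonal _ _ i
  rw [hD]
  exact sum_congr rfl fun i _ => by ring

theorem sum_mul_eval_mul_eval_eq_zero_of_forall_le {ι : Type*} [Fintype ι] (x w : ι → ℝ)
    {k : ℕ} {Q : ℝ[X]} (hQ : Q.natDegree ≤ k) (hQ0 : Q.eval 0 = 1)
    (hmin : ∀ P : ℝ[X], P.natDegree ≤ k → P.eval 0 = 1 →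
      ∑ i, w i * Q.eval (x i) ^ 2 ≤ ∑ i, w i * P.eval (x i) ^ 2)
    (R : ℝ[X]) (hR : R.natDegree ≤ k) (hR0 : R.eval 0 = 0) :
    ∑ i, w i * (Q.eval (x i) * R.eval (x i)) = 0 := by
  set B := ∑ i, w i * (Q.eval (x i) * R.eval (x i))
  have hquad : ∀ t : ℝ, 0 ≤ (∑ i, w i * R.eval (x i) ^ 2) * (t * t) + 2 * B * t + 0 := by
    intro t
    have hP := hmin (Q + C t * R)
      (natDegree_add_le_of_degree_le hQ ((natDegree_C_mul_le t R).trans hR)) (by simp [hQ0, hR0])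
    have hexp : ∑ i, w i * (Q + C t * R).eval (x i) ^ 2 = ∑ i, w i * Q.eval (x i) ^ 2 +
        ((∑ i, w i * R.eval (x i) ^ 2) * (t * t) + 2 * B * t) := by
      simp only [eval_add, eval_mul, eval_C, B, mul_sum, sum_mul, ← sum_add_distrib]
      exact sum_congr rfl fun i _ => by ring
    linarith
  have hdisc := discrim_le_zero hquad
  rw [discrim] at hdisc
  nlinarith [sq_nonneg B]

theorem exists_zero_mem_Ioc_of_mul_nonpos {f : ℝ → ℝ} {a b : ℝ}
    (hf : ContinuousOn f (Set.Icc a b)) (hab : a ≤ b) (ha : f a ≠ 0) (h : f a * f b ≤ 0) :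
    ∃ c ∈ Set.Ioc a b, f c = 0 := by
  have h0 : (0 : ℝ) ∈ Set.uIcc (f a) (f b) := by
    rw [Set.mem_uIcc]
    rcases mul_nonpos_iff.1 h with ⟨h1, h2⟩ | ⟨h1, h2⟩
    · exact Or.inr ⟨h2, h1⟩
    · exact Or.inl ⟨h1, h2⟩
  obtain ⟨c, hc, hfc⟩ := intermediate_value_uIcc (by rwa [Set.uIcc_of_le hab]) h0
  rw [Set.uIcc_of_le hab] at hc
  exact ⟨c, ⟨lt_of_le_of_ne hc.1 (by rintro rfl; exact ha hfc), hc.2⟩, hfc⟩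

theorem Continuous.exists_zeros_sign_constant {f : ℝ → ℝ} (hf : Continuous f) (s : Finset ℝ) :
    ∃ ε ≠ (0 : ℝ), ∃ Θ : Finset ℝ, (∀ θ ∈ Θ, f θ = 0) ∧ (∀ θ ∈ Θ, ∃ x ∈ s, x < θ) ∧
      ∀ x ∈ s, 0 ≤ ε * (f x * ∏ θ ∈ Θ, (x - θ)) := by
  classical
  induction s using Finset.induction_on_min with
  | empty => exact ⟨1, one_ne_zero, ∅, by simp, by simp, by simp⟩
  | insert a s ha ih =>
    obtain ⟨ε, hε, Θ, hzero, hleft, hsign⟩ := ih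
    have hleft' : ∀ θ ∈ Θ, ∃ x ∈ insert a s, x < θ := fun θ hθ =>
      (hleft θ hθ).imp fun x hx => ⟨mem_insert_of_mem hx.1, hx.2⟩
    by_cases hsa : 0 ≤ ε * (f a * ∏ θ ∈ Θ, (a - θ))
    · exact ⟨ε, hε, Θ, hzero, hleft', forall_mem_insert _ _ _ |>.2 ⟨hsa, hsign⟩⟩
    rw [not_le] at hsa
    rcases s.eq_empty_or_nonempty with rfl | hs
    · refine ⟨-ε, neg_ne_zero.2 hε, Θ, hzero, hleft', ?_⟩
      simp only [insert_empty, mem_singleton, forall_eq]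
      linarith
    -- `f` changes sign between `a` and the next point `b`; a zero `c ∈ (a, b]` of `f` flips the
    -- sign at `a` and leaves it unchanged at the points `≥ b`.
    set b := s.min' hs
    have hab : a < b := ha b (s.min'_mem hs)
    have hbΘ : ∀ θ ∈ Θ, b < θ := fun θ hθ => by
      obtain ⟨x, hx, hxθ⟩ := hleft θ hθ
      exact (s.min'_le x hx).trans_lt hxθ
    have hprod : 0 < (∏ θ ∈ Θ, (a - θ)) * ∏ θ ∈ Θ, (b - θ) := by
      rw [← prod_mul_distrib]
      exact prod_pos fun θ hθ => mul_pos_of_neg_of_neg (by linarith [hbΘ θ hθ])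
        (by linarith [hbΘ θ hθ])
    have hfa : f a ≠ 0 := by rintro h; simp [h] at hsa
    have hfab : f a * f b ≤ 0 := by
      have hε2 : 0 < ε ^ 2 := by positivity
      have := mul_nonpos_of_nonpos_of_nonneg hsa.le (hsign b (s.min'_mem hs))
      refine not_lt.1 fun h => (mul_pos h (mul_pos hε2 hprod)).not_ge ?_
      linarith
    obtain ⟨c, ⟨hac, hcb⟩, hfc⟩ :=
      exists_zero_mem_Ioc_of_mul_nonpos hf.continuousOn hab.le hfa hfab
    have hcΘ : c ∉ Θ := fun hc => (hbΘ c hc).not_ge hcb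
    refine ⟨ε, hε, insert c Θ, forall_mem_insert _ _ _ |>.2 ⟨hfc, hzero⟩,
      forall_mem_insert _ _ _ |>.2 ⟨⟨a, mem_insert_self a s, hac⟩, hleft'⟩, ?_⟩
    intro x hx
    rw [prod_insert hcΘ]
    rcases mem_insert.1 hx with rfl | hx
    · nlinarith
    · have : c ≤ x := hcb.trans (s.min'_le x hx)
      nlinarith [hsign x hx]

theorem le_card_of_sign_constant {ι : Type*} [Fintype ι] {x w : ι → ℝ} (hx : Injective x)
    (hxpos : ∀ i, 0 < x i) (hw : ∀ i, 0 < w i) {k : ℕ} (hk : k < Fintype.card ι)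
    {Q : ℝ[X]} (hQ : Q ≠ 0) (hQk : Q.natDegree ≤ k)
    (horth : ∀ R : ℝ[X], R.natDegree ≤ k → R.eval 0 = 0 →
      ∑ i, w i * (Q.eval (x i) * R.eval (x i)) = 0)
    {ε : ℝ} (hε : ε ≠ 0) {Θ : Finset ℝ} (hzero : ∀ θ ∈ Θ, Q.eval θ = 0)
    (hsign : ∀ i, 0 ≤ ε * (Q.eval (x i) * ∏ θ ∈ Θ, (x i - θ))) :
    k ≤ Θ.card := by
  by_contra! hΘ
  have hterm : ∀ i, ε * (w i * (Q.eval (x i) * (X * ∏ θ ∈ Θ, (X - C θ)).eval (x i))) =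
      w i * x i * (ε * (Q.eval (x i) * ∏ θ ∈ Θ, (x i - θ))) := fun i => by
    simp only [eval_mul, eval_X, eval_prod, eval_sub, eval_C]; ring
  have hS : (∏ θ ∈ Θ, (X - C θ)) ≠ 0 := (monic_prod_of_monic _ _ fun θ _ => monic_X_sub_C θ).ne_zero
  have hsum := horth (X * ∏ θ ∈ Θ, (X - C θ)) (by rw [natDegree_X_mul hS]; simpa using hΘ)
    (by simp)
  have hvanish : ∀ i, w i * x i * (ε * (Q.eval (x i) * ∏ θ ∈ Θ, (x i - θ))) = 0 := by
    refine fun i => (sum_eq_zero_iff_of_nonneg fun i _ =>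
      mul_nonneg (mul_pos (hw i) (hxpos i)).le (hsign i)).1 ?_ i (mem_univ i)
    simp only [← hterm, ← mul_sum, hsum, mul_zero]
  refine hQ (eq_zero_of_natDegree_lt_card_of_eval_eq_zero Q hx (fun i => ?_) (hQk.trans_lt hk))
  rcases mul_eq_zero.1 (hvanish i) with h | h
  · exact absurd h (mul_pos (hw i) (hxpos i)).ne'
  rcases mul_eq_zero.1 h with h | h
  · exact absurd h hε
  rcases mul_eq_zero.1 h with h | h
  · exact h
  obtain ⟨θ, hθ, hxθ⟩ := prod_eq_zero_iff.1 h
  rw [sub_eq_zero.1 hxθ]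
  exact hzero θ hθ

theorem eval_eq_prod_one_sub_div {Q : ℝ[X]} {Θ : Finset ℝ} (hQΘ : Q.natDegree ≤ Θ.card)
    (hQ0 : Q.eval 0 = 1) (hzero : ∀ θ ∈ Θ, Q.eval θ = 0) (y : ℝ) :
    Q.eval y = ∏ θ ∈ Θ, (1 - y / θ) := by
  have hQ : Q ≠ 0 := by rintro rfl; simp at hQ0
  have hdvd : ∏ θ ∈ Θ, (X - C θ) ∣ Q := by
    refine (Multiset.prod_X_sub_C_dvd_iff_le_roots hQ Θ.val).2 ?_
    exact (Multiset.le_iff_subset Θ.nodup).2 fun θ hθ => (mem_roots hQ).2 (hzero θ hθ)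
  have hQS := eq_leadingCoeff_mul_of_monic_of_dvd_of_natDegree_le
    (monic_prod_of_monic _ _ fun θ _ => monic_X_sub_C θ) hdvd
    (by simpa using hQΘ)
  have heval : ∀ z, Q.eval z = Q.leadingCoeff * ∏ θ ∈ Θ, (z - θ) := fun z => by
    nth_rw 1 [hQS]; rw [eval_mul, eval_C, eval_prod]; simp only [eval_sub, eval_X, eval_C]
  have hΘ0 : ∀ θ ∈ Θ, θ ≠ 0 := fun θ hθ h => by simp [h ▸ hzero θ hθ] at hQ0
  calc Q.eval y = Q.eval y / Q.eval 0 := by rw [hQ0, div_one]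
    _ = ∏ θ ∈ Θ, ((y - θ) / (0 - θ)) := by
      rw [heval, heval, mul_div_mul_left _ _ (leadingCoeff_ne_zero.2 hQ), prod_div_distrib]
    _ = ∏ θ ∈ Θ, (1 - y / θ) := prod_congr rfl fun θ hθ => by field_simp [hΘ0 θ hθ]; ring

theorem prod_one_sub_div_mem_Ioo {Θ : Finset ℝ} (hΘ : Θ.Nonempty) {y : ℝ} (hy : 0 < y)
    (hyΘ : ∀ θ ∈ Θ, y < θ) : ∏ θ ∈ Θ, (1 - y / θ) ∈ Set.Ioo 0 1 := by
  have hfac : ∀ θ ∈ Θ, 1 - y / θ ∈ Set.Ioo 0 1 := fun θ hθ => by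
    have hθ0 := hy.trans (hyΘ θ hθ)
    constructor
    · simpa [sub_pos, div_lt_one hθ0] using hyΘ θ hθ
    · simpa using div_pos hy hθ0
  refine ⟨prod_pos fun θ hθ => (hfac θ hθ).1, ?_⟩
  simpa using prod_lt_prod_of_nonempty (fun θ hθ => (hfac θ hθ).1) (fun θ hθ => (hfac θ hθ).2) hΘ

theorem eval_mem_Ioo_of_orthogonal {ι : Type*} [Fintype ι] {x w : ι → ℝ} (hx : Injective x)
    (hxpos : ∀ i, 0 < x i) (hw : ∀ i, 0 < w i) {k : ℕ} (hk1 : 1 ≤ k) (hk : k < Fintype.card ι)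
    {Q : ℝ[X]} (hQk : Q.natDegree ≤ k) (hQ0 : Q.eval 0 = 1)
    (horth : ∀ R : ℝ[X], R.natDegree ≤ k → R.eval 0 = 0 →
      ∑ i, w i * (Q.eval (x i) * R.eval (x i)) = 0)
    {y : ℝ} (hy0 : 0 < y) (hy : ∀ i, y ≤ x i) : Q.eval y ∈ Set.Ioo 0 1 := by
  classical
  obtain ⟨ε, hε, Θ, hzero, hleft, hsign⟩ :=
    Q.continuous.exists_zeros_sign_constant (univ.image x)
  have hcard : k ≤ Θ.card := le_card_of_sign_constant hx hxpos hw hk (by rintro rfl; simp at hQ0)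
    hQk horth hε hzero fun i => hsign (x i) (mem_image_of_mem x (mem_univ i))
  have hyΘ : ∀ θ ∈ Θ, y < θ := fun θ hθ => by
    obtain ⟨_, hi, hiθ⟩ := hleft θ hθ
    obtain ⟨i, -, rfl⟩ := mem_image.1 hi
    exact (hy i).trans_lt hiθ
  rw [eval_eq_prod_one_sub_div (hQk.trans hcard) hQ0 hzero]
  exact prod_one_sub_div_mem_Ioo (card_pos.1 (by omega)) hy0 hyΘ

/-- the PLS filter factor in the direction of the smallest eigenvalue
λ_n (index n−1 here) satisfies 0 < f_n^k < 1 where f_n^k = 1 − Q̂_k(λ_n). -/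
theorem stmt12 {n p : ℕ} (X : Matrix (Fin n) (Fin p) ℝ) (Y : Fin n → ℝ)
    (lam : Fin n → ℝ) (u : Fin n → Fin n → ℝ)
    (hortho : ∀ i j, u i ⬝ᵥ u j = if i = j then (1 : ℝ) else 0)
    (hspec : X * Xᵀ = ∑ i, lam i • vecMulVec (u i) (u i))
    (hanti : StrictAnti lam) (hpos : ∀ i, 0 < lam i)
    (hphat : ∀ i, u i ⬝ᵥ Y ≠ 0)
    (Qhat : ℕ → Polynomial ℝ)
    (hQmem : ∀ k, 1 ≤ k → k < n → (Qhat k).natDegree ≤ k ∧ (Qhat k).eval 0 = 1)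
    (hQmin : ∀ k, 1 ≤ k → k < n → ∀ Q : Polynomial ℝ, Q.natDegree ≤ k → Q.eval 0 = 1 →
      ∑ i, (((Polynomial.aeval (X * Xᵀ)) (Qhat k) *ᵥ Y) i) ^ 2 ≤
        ∑ i, (((Polynomial.aeval (X * Xᵀ)) Q *ᵥ Y) i) ^ 2)
    (k : ℕ) (hk1 : 1 ≤ k) (hkn : k < n) :
    0 < 1 - (Qhat k).eval (lam ⟨n - 1, by omega⟩) ∧
      1 - (Qhat k).eval (lam ⟨n - 1, by omega⟩) < 1 := by
  obtain ⟨hdeg, h0⟩ := hQmem k hk1 hkn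
  have horth := sum_mul_eval_mul_eval_eq_zero_of_forall_le lam (fun i => (u i ⬝ᵥ Y) ^ 2) hdeg h0
    fun Q hQ hQ0 => by
      simpa only [sum_sq_aeval_mulVec_eq hortho hspec] using hQmin k hk1 hkn Q hQ hQ0
  have hlam_min : ∀ i, lam ⟨n - 1, by omega⟩ ≤ lam i := fun i =>
    hanti.antitone (Fin.mk_le_mk.2 (by omega) : i ≤ ⟨n - 1, by omega⟩)
  have hQ := eval_mem_Ioo_of_orthogonal hanti.injective hpos (fun i => sq_pos_of_ne_zero (hphat i))
    hk1 (by simpa using hkn) hdeg h0 horth (hpos _) hlam_min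
  exact ⟨by linarith [hQ.2], by linarith [hQ.1]⟩
end
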